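/- Orbit-sum lemma on the square: for every n ≥ 1, every plaquette α of the n×n FPL domain, and every φ ∈ Fpl(n,+), one has Σ_{φ′ ∈ O(φ)} N_α(φ′) = 0, where O(φ) = {G^k(φ) : k ≥ 0} is the orbit of φ under the gyration G. -/

import Mathlib

open scoped Classical

/-! ### Link patterns

A link pattern on `2n` cyclically ordered points is a fixed-point-free noncrossing
involution.  The point `i : ZMod (2*n)` represents the label `lbl (2*n) i ∈ {1,…,2n}`
(so label arithmetic is arithmetic in `ZMod (2*n)`). -/

instance instNeZeroTwoMul (n : ℕ) [NeZero n] : NeZero (2 * n) :=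
  ⟨by have := NeZero.ne n; omega⟩

/-- The label in `{1,…,M}` represented by a point of `ZMod M`. -/
def lbl (M : ℕ) (i : ZMod M) : ℕ := if i.val = 0 then M else i.val

/-- A fixed-point-free involution of the `2n` points on a circle which is noncrossing. -/
def IsLinkPattern (n : ℕ) (f : ZMod (2 * n) → ZMod (2 * n)) : Prop :=
  Function.Involutive f ∧ (∀ i, f i ≠ i) ∧
    ∀ i j : ZMod (2 * n), ¬ (i.val < j.val ∧ j.val < (f i).val ∧ (f i).val < (f j).val)

/-- The set `LP(n)` of link patterns on `2n` points, as a subtype. -/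
abbrev LinkPattern (n : ℕ) := {f : ZMod (2 * n) → ZMod (2 * n) // IsLinkPattern n f}

/-- Rotation `R`: `R π` pairs `i-1` with `j-1` whenever `π` pairs `i` with `j`. -/
def rotMap (M : ℕ) (f : ZMod M → ZMod M) : ZMod M → ZMod M := fun i => f (i + 1) - 1

/-- Inverse rotation `R⁻¹`. -/
def rotInvMap (M : ℕ) (f : ZMod M → ZMod M) : ZMod M → ZMod M := fun i => f (i - 1) + 1

/-- The Temperley–Lieb map `e_j` (here `j : ZMod M` represents the label `lbl M j`):
if `π` pairs `j` with `j+1` it does nothing, otherwise it re-pairs `j` with `j+1`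
and `π(j)` with `π(j+1)`. -/
def eMap (M : ℕ) (j : ZMod M) (f : ZMod M → ZMod M) : ZMod M → ZMod M := fun i =>
  if f j = j + 1 then f i
  else if i = j then j + 1
  else if i = j + 1 then j
  else if i = f j then f (j + 1)
  else if i = f (j + 1) then f j
  else f i

/-! ### The `n × n` FPL domain

Vertices are `(x,y)` with `1 ≤ x,y ≤ n`.  `SqEdge.h x y` is the horizontal edge joining
`(x,y)` and `(x+1,y)` (valid for `0 ≤ x ≤ n`, `1 ≤ y ≤ n`; `x = 0` and `x = n` give the
west/east external edges); `SqEdge.v x y` is the vertical edge joining `(x,y)` and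
`(x,y+1)` (valid for `1 ≤ x ≤ n`, `0 ≤ y ≤ n`; `y = 0` and `y = n` give the south/north
external edges).  A configuration is a map `SqEdge → Bool` (`true` = black). -/

inductive SqEdge : Type
  | h : ℕ → ℕ → SqEdge
  | v : ℕ → ℕ → SqEdge
deriving DecidableEq

/-- Validity of an edge for the `n × n` domain. -/
def validB (n : ℕ) : SqEdge → Bool
  | .h x y => decide (x ≤ n) && decide (1 ≤ y) && decide (y ≤ n)
  | .v x y => decide (1 ≤ x) && decide (x ≤ n) && decide (y ≤ n)

/-- The external edge with counterclockwise label `k ∈ {1,…,4n}`, starting from the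
bottom external edge of the corner vertex `(1,1)`. -/
def extEdge (n k : ℕ) : SqEdge :=
  if k ≤ n then .v k 0
  else if k ≤ 2 * n then .h n (k - n)
  else if k ≤ 3 * n then .v (3 * n + 1 - k) n
  else .h 0 (4 * n + 1 - k)

def IsExternal (n : ℕ) (e : SqEdge) : Prop := ∃ k, 1 ≤ k ∧ k ≤ 4 * n ∧ e = extEdge n k

/-- The west, east, south, north edges incident to the vertex `(x,y)`. -/
def wEdge (x y : ℕ) : SqEdge := .h (x - 1) y
def eEdge (x y : ℕ) : SqEdge := .h x y
def sEdge (x y : ℕ) : SqEdge := .v x (y - 1)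
def nEdge (x y : ℕ) : SqEdge := .v x y

def IncidentAt (e : SqEdge) (x y : ℕ) : Prop :=
  e = wEdge x y ∨ e = eEdge x y ∨ e = sEdge x y ∨ e = nEdge x y

def blackDeg (φ : SqEdge → Bool) (x y : ℕ) : ℕ :=
  (if φ (wEdge x y) then 1 else 0) + (if φ (eEdge x y) then 1 else 0) +
    (if φ (sEdge x y) then 1 else 0) + (if φ (nEdge x y) then 1 else 0)

/-- A fully-packed loop configuration on the `n × n` domain: it is supported on the
valid edges, and every vertex is incident to exactly two black (and two white) edges. -/
def IsFpl (n : ℕ) (φ : SqEdge → Bool) : Prop :=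
  (∀ e, φ e = true → validB n e = true) ∧
    ∀ x y, 1 ≤ x → x ≤ n → 1 ≤ y → y ≤ n → blackDeg φ x y = 2

/-- Alternating boundary colouring `τ₊` (external label `1` black). -/
def BPlus (n : ℕ) (φ : SqEdge → Bool) : Prop :=
  ∀ k, 1 ≤ k → k ≤ 4 * n → (φ (extEdge n k) = true ↔ k % 2 = 1)

/-- Complementary alternating boundary colouring `τ₋`. -/
def BMinus (n : ℕ) (φ : SqEdge → Bool) : Prop :=
  ∀ k, 1 ≤ k → k ≤ 4 * n → (φ (extEdge n k) = true ↔ k % 2 = 0)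

/-- Two (valid) edges of colour `b` sharing an internal vertex. -/
def adjC (n : ℕ) (b : Bool) (φ : SqEdge → Bool) (e e' : SqEdge) : Prop :=
  e ≠ e' ∧ validB n e = true ∧ validB n e' = true ∧ φ e = b ∧ φ e' = b ∧
    ∃ x y, 1 ≤ x ∧ x ≤ n ∧ 1 ≤ y ∧ y ≤ n ∧ IncidentAt e x y ∧ IncidentAt e' x y

/-- Connectivity through monochromatic paths of colour `b`. -/
def Conn (n : ℕ) (b : Bool) (φ : SqEdge → Bool) : SqEdge → SqEdge → Prop :=
  Relation.ReflTransGen (adjC n b φ)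

/-- In `Fpl(n,+)` the black external edge with black label `t ∈ {1,…,2n}` has overall
label `2t-1`.  `φ` has link pattern (matching) `g` iff for every point `i` the black
external edges with black labels `lbl i` and `lbl (g i)` are joined by a black path. -/
def RealizesP (n : ℕ) (φ : SqEdge → Bool) (g : ZMod (2 * n) → ZMod (2 * n)) : Prop :=
  ∀ i, Conn n true φ (extEdge n (2 * lbl (2 * n) i - 1)) (extEdge n (2 * lbl (2 * n) (g i) - 1))

/-- In `Fpl(n,-)` the black external edge with black label `t` has overall label `2t`
(black labelling starting from the bottom external edge of the vertex `(2,1)`). -/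
def RealizesM (n : ℕ) (φ : SqEdge → Bool) (g : ZMod (2 * n) → ZMod (2 * n)) : Prop :=
  ∀ i, Conn n true φ (extEdge n (2 * lbl (2 * n) i)) (extEdge n (2 * lbl (2 * n) (g i)))

/-- `Ψ_{n,+}(g)`: the number of FPLs in `Fpl(n,+)` with link pattern `g`. -/
noncomputable def PsiP (n : ℕ) (g : ZMod (2 * n) → ZMod (2 * n)) : ℕ :=
  Set.ncard {φ : SqEdge → Bool | IsFpl n φ ∧ BPlus n φ ∧ RealizesP n φ g}

/-- `Ψ_{n,-}(g)`: the number of FPLs in `Fpl(n,-)` with link pattern `g`. -/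
noncomputable def PsiM (n : ℕ) (g : ZMod (2 * n) → ZMod (2 * n)) : ℕ :=
  Set.ncard {φ : SqEdge → Bool | IsFpl n φ ∧ BMinus n φ ∧ RealizesM n φ g}

/-- The plaquette with lower-left corner `(x,y)` (for `1 ≤ x,y ≤ n-1`) has horizontal
edges `.h x y`, `.h x (y+1)` and vertical edges `.v x y`, `.v (x+1) y`.
`Nplaq φ x y` is `+1` if both horizontal edges are black and both vertical edges white,
`-1` in the complementary case, and `0` otherwise. -/
def Nplaq (φ : SqEdge → Bool) (x y : ℕ) : ℤ :=
  if φ (.h x y) = true ∧ φ (.h x (y + 1)) = true ∧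
      φ (.v x y) = false ∧ φ (.v (x + 1) y) = false then 1
  else if φ (.h x y) = false ∧ φ (.h x (y + 1)) = false ∧
      φ (.v x y) = true ∧ φ (.v (x + 1) y) = true then -1
  else 0

/-! ### Wieland gyration on the `n × n` domain.

For `H₊` the external edges are glued in the pairs `(1,2),(3,4),…`; the cells of the
resulting partition of the edge set are the interior plaquettes `(x,y)` with `x+y` odd,
together with boundary cells (of length 2 or 3) through the glued vertices.  For `H₋`
(pairs `(2,3),(4,5),…,(4n,1)`) the interior cells are the plaquettes with `x+y` even.
`H₊/H₋` complement the colours on every cell except the alternating 4-cells (interior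
plaquettes whose colours alternate), which are kept fixed. -/

/-- The interior cell (plaquette of parity `p`) containing the edge `e`, if any;
edges in no interior plaquette of parity `p` lie in a boundary cell. -/
def plaqOf (n p : ℕ) : SqEdge → Option (ℕ × ℕ)
  | .h x y =>
    if 1 ≤ x ∧ x ≤ n - 1 ∧ 1 ≤ y ∧ y ≤ n - 1 ∧ (x + y) % 2 = p then some (x, y)
    else if 1 ≤ x ∧ x ≤ n - 1 ∧ 2 ≤ y ∧ y ≤ n ∧ (x + y - 1) % 2 = p then some (x, y - 1)
    else none
  | .v x y =>
    if 1 ≤ x ∧ x ≤ n - 1 ∧ 1 ≤ y ∧ y ≤ n - 1 ∧ (x + y) % 2 = p then some (x, y)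
    else if 2 ≤ x ∧ x ≤ n ∧ 1 ≤ y ∧ y ≤ n - 1 ∧ (x + y - 1) % 2 = p then some (x - 1, y)
    else none

/-- Colours alternate around the plaquette `(x,y)`. -/
def altPlaq (φ : SqEdge → Bool) (x y : ℕ) : Bool :=
  (φ (.h x y) == φ (.h x (y + 1))) && (φ (.v x y) == φ (.v (x + 1) y)) &&
    (φ (.h x y) != φ (.v x y))

/-- One gyration round on the cells of parity `p`. -/
def gyrHalf (n p : ℕ) (φ : SqEdge → Bool) : SqEdge → Bool := fun e =>
  if validB n e then
    match plaqOf n p e with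
    | some (x, y) => if altPlaq φ x y then φ e else !(φ e)
    | none => !(φ e)
  else false

/-- The gyration round `H₊` (interior cells: plaquettes with `x+y` odd). -/
def Hplus (n : ℕ) : (SqEdge → Bool) → SqEdge → Bool := gyrHalf n 1

/-- The gyration round `H₋` (interior cells: plaquettes with `x+y` even). -/
def Hminus (n : ℕ) : (SqEdge → Bool) → SqEdge → Bool := gyrHalf n 0

/-- Wieland's gyration `G = H₋ ∘ H₊`. -/
def gyr (n : ℕ) (φ : SqEdge → Bool) : SqEdge → Bool := Hminus n (Hplus n φ)

/-- Complementation of the colours of all (valid) edges. -/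
def complV (n : ℕ) (φ : SqEdge → Bool) : SqEdge → Bool := fun e =>
  if validB n e then !(φ e) else false

/-- `H̃₊`: the round `H₊` followed by complementation (a map `Fpl(n,+) → Fpl(n,+)`). -/
def Htp (n : ℕ) (φ : SqEdge → Bool) : SqEdge → Bool := complV n (Hplus n φ)

/-- The orbit `{G^k φ : k ≥ 0}` of `φ` under gyration. -/
def orbitG (n : ℕ) (φ : SqEdge → Bool) : Set (SqEdge → Bool) :=
  Set.range fun k => (gyr n)^[k] φ

/-!
Fix the column `x` and the alternating potential
`D_y(ψ) = Σ_{j ≤ y} (-1)^(y-j) [ψ(h x j) black]`.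
In each half-round `H₊`, `H₋` a horizontal edge lies in exactly one cell, and its colours before
and after the round add up to `1 + N` of that cell: an alternating plaquette keeps the colour
and has `N = ±1` according to it, every other cell is complemented and has `N = 0`.
Each interior plaquette of the column is met by two consecutive edges with opposite signs, so
`D_y(Gψ) - D_y(ψ)` telescopes to the single plaquette `α = (x, y)`: it is `N_α(Gψ)` if `α` is a
cell of `H₋` and `-N_α(ψ)` if it is a cell of `H₊`. Gyration permutes the finite orbit of `φ`,
so summing over the orbit makes the potentials cancel.
-/

theorem finsum_mem_range_iterate_comp {α M : Type*} [AddCommMonoid M] {f : α → α} {a : α}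
    (hfin : (Set.range fun k => f^[k] a).Finite)
    (hinj : Set.InjOn f (Set.range fun k => f^[k] a)) (g : α → M) :
    ∑ᶠ x ∈ Set.range (fun k => f^[k] a), g (f x) = ∑ᶠ x ∈ Set.range (fun k => f^[k] a), g x := by
  have hmaps : Set.MapsTo f (Set.range fun k => f^[k] a) (Set.range fun k => f^[k] a) := by
    rintro _ ⟨k, rfl⟩
    exact ⟨k + 1, Function.iterate_succ_apply' f k a⟩
  exact finsum_mem_eq_of_bijOn f ((hfin.injOn_iff_bijOn_of_mapsTo hmaps).1 hinj) fun _ _ => rfl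

theorem finite_setOf_forall_eq_true_imp_mem {α : Type*} {s : Set α} (hs : s.Finite) :
    {φ : α → Bool | ∀ e, φ e = true → e ∈ s}.Finite := by
  have hinj : Function.Injective fun (φ : α → Bool) => {e | φ e = true} := by
    intro φ ψ h
    funext e
    exact Bool.eq_iff_iff.2 (Set.ext_iff.1 h e)
  exact (hs.finite_subsets.preimage hinj.injOn :)

theorem finite_setOf_validB (n : ℕ) : {e | validB n e = true}.Finite := by
  refine (((Set.finite_Iic n).prod (Set.finite_Iic n)).image (fun q => SqEdge.h q.1 q.2) |>.union
    (((Set.finite_Iic n).prod (Set.finite_Iic n)).image (fun q => SqEdge.v q.1 q.2))).subset ?_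
  rintro (⟨x, y⟩ | ⟨x, y⟩) he <;>
    simp only [Set.mem_ofPred_eq, validB, Bool.and_eq_true, decide_eq_true_eq] at he
  · exact Or.inl ⟨(x, y), ⟨Set.mem_Iic.2 he.1.1, Set.mem_Iic.2 he.2⟩, rfl⟩
  · exact Or.inr ⟨(x, y), ⟨Set.mem_Iic.2 he.1.2, Set.mem_Iic.2 he.2⟩, rfl⟩

def supportedConfigs (n : ℕ) : Set (SqEdge → Bool) := {φ | ∀ e, φ e = true → validB n e = true}

theorem supportedConfigs_finite (n : ℕ) : (supportedConfigs n).Finite :=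
  finite_setOf_forall_eq_true_imp_mem (finite_setOf_validB n)

theorem gyrHalf_mem_supportedConfigs (n p : ℕ) (φ : SqEdge → Bool) :
    gyrHalf n p φ ∈ supportedConfigs n := by
  intro e he
  by_contra hv
  simp [gyrHalf, hv] at he

section Plaquette

variable {ψ ψ' : SqEdge → Bool} {a b : ℕ} {c : Bool}

theorem Nplaq_eq_bot : Nplaq ψ a b = if altPlaq ψ a b then 2 * (ψ (.h a b)).toInt - 1 else 0 := by
  unfold altPlaq Nplaq
  cases h₁ : ψ (.h a b) <;> cases h₂ : ψ (.h a (b + 1)) <;> cases h₃ : ψ (.v a b) <;>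
    cases h₄ : ψ (.v (a + 1) b) <;> simp

theorem Nplaq_eq_top :
    Nplaq ψ a b = if altPlaq ψ a b then 2 * (ψ (.h a (b + 1))).toInt - 1 else 0 := by
  unfold altPlaq Nplaq
  cases h₁ : ψ (.h a b) <;> cases h₂ : ψ (.h a (b + 1)) <;> cases h₃ : ψ (.v a b) <;>
    cases h₄ : ψ (.v (a + 1) b) <;> simp

theorem altPlaq_eq_of_xor (h₁ : ψ' (.h a b) = xor (ψ (.h a b)) c)
    (h₂ : ψ' (.h a (b + 1)) = xor (ψ (.h a (b + 1))) c) (h₃ : ψ' (.v a b) = xor (ψ (.v a b)) c)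
    (h₄ : ψ' (.v (a + 1) b) = xor (ψ (.v (a + 1) b)) c) : altPlaq ψ' a b = altPlaq ψ a b := by
  simp only [altPlaq, h₁, h₂, h₃, h₄]
  cases c <;> cases ψ (.h a b) <;> cases ψ (.h a (b + 1)) <;> cases ψ (.v a b) <;>
    cases ψ (.v (a + 1) b) <;> rfl

theorem Nplaq_eq_of_xor (h₁ : ψ' (.h a b) = xor (ψ (.h a b)) c)
    (h₂ : ψ' (.h a (b + 1)) = xor (ψ (.h a (b + 1))) c) (h₃ : ψ' (.v a b) = xor (ψ (.v a b)) c)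
    (h₄ : ψ' (.v (a + 1) b) = xor (ψ (.v (a + 1) b)) c) :
    Nplaq ψ' a b = if c then -Nplaq ψ a b else Nplaq ψ a b := by
  simp only [Nplaq, h₁, h₂, h₃, h₄]
  cases c <;> cases ψ (.h a b) <;> cases ψ (.h a (b + 1)) <;> cases ψ (.v a b) <;>
    cases ψ (.v (a + 1) b) <;> rfl

end Plaquette

section Gyration

variable {n p a b : ℕ}

theorem plaqOf_eq_some {e : SqEdge} (h : plaqOf n p e = some (a, b)) :
    1 ≤ a ∧ a ≤ n - 1 ∧ 1 ≤ b ∧ b ≤ n - 1 ∧ (a + b) % 2 = p := by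
  cases e <;> simp only [plaqOf] at h <;> split_ifs at h <;>
    simp only [Option.some.injEq, Prod.mk.injEq] at h <;> omega

theorem plaqOf_h_column {x j : ℕ} (hx : 1 ≤ x) (hx' : x ≤ n - 1) (hj : 1 ≤ j) (hj' : j ≤ n - 1)
    (hp : p ≤ 1) :
    plaqOf n p (.h x j) =
      if (x + j) % 2 = p then some (x, j) else if 2 ≤ j then some (x, j - 1) else none := by
  simp only [plaqOf]
  split_ifs <;> first | rfl | omega

theorem gyrHalf_apply_of_plaqOf_eq_some {e : SqEdge} (hv : validB n e = true)
    (hq : plaqOf n p e = some (a, b)) (ψ : SqEdge → Bool) :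
    gyrHalf n p ψ e = xor (ψ e) (!altPlaq ψ a b) := by
  cases h : altPlaq ψ a b <;> simp [gyrHalf, hv, hq, h]

theorem gyrHalf_apply_of_plaqOf_eq_none {e : SqEdge} (hv : validB n e = true)
    (hq : plaqOf n p e = none) (ψ : SqEdge → Bool) : gyrHalf n p ψ e = !ψ e := by
  simp [gyrHalf, hv, hq]

theorem gyrHalf_plaquette (ha : 1 ≤ a) (ha' : a ≤ n - 1) (hb : 1 ≤ b) (hb' : b ≤ n - 1)
    (hp : (a + b) % 2 = p) (ψ : SqEdge → Bool) :
    let c := !altPlaq ψ a b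
    gyrHalf n p ψ (.h a b) = xor (ψ (.h a b)) c ∧
      gyrHalf n p ψ (.h a (b + 1)) = xor (ψ (.h a (b + 1))) c ∧
      gyrHalf n p ψ (.v a b) = xor (ψ (.v a b)) c ∧
      gyrHalf n p ψ (.v (a + 1) b) = xor (ψ (.v (a + 1) b)) c := by
  refine ⟨?_, ?_, ?_, ?_⟩ <;> refine gyrHalf_apply_of_plaqOf_eq_some ?_ ?_ ψ
  all_goals first
    | simp only [validB, Bool.and_eq_true, decide_eq_true_eq]; omega
    | simp only [plaqOf]
  · rw [if_pos (by omega)]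
  · rw [if_neg (by omega), if_pos (by omega), Nat.add_sub_cancel]
  · rw [if_pos (by omega)]
  · rw [if_neg (by omega), if_pos (by omega), Nat.add_sub_cancel]

theorem altPlaq_gyrHalf (ha : 1 ≤ a) (ha' : a ≤ n - 1) (hb : 1 ≤ b) (hb' : b ≤ n - 1)
    (hp : (a + b) % 2 = p) (ψ : SqEdge → Bool) : altPlaq (gyrHalf n p ψ) a b = altPlaq ψ a b :=
  let ⟨h₁, h₂, h₃, h₄⟩ := gyrHalf_plaquette ha ha' hb hb' hp ψ
  altPlaq_eq_of_xor h₁ h₂ h₃ h₄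

theorem Nplaq_gyrHalf (ha : 1 ≤ a) (ha' : a ≤ n - 1) (hb : 1 ≤ b) (hb' : b ≤ n - 1)
    (hp : (a + b) % 2 = p) (ψ : SqEdge → Bool) : Nplaq (gyrHalf n p ψ) a b = Nplaq ψ a b := by
  obtain ⟨h₁, h₂, h₃, h₄⟩ := gyrHalf_plaquette ha ha' hb hb' hp ψ
  rw [Nplaq_eq_of_xor h₁ h₂ h₃ h₄, Nplaq_eq_bot (ψ := ψ)]
  cases altPlaq ψ a b <;> simp

theorem gyrHalf_gyrHalf {φ : SqEdge → Bool} (hφ : φ ∈ supportedConfigs n) :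
    gyrHalf n p (gyrHalf n p φ) = φ := by
  funext e
  by_cases hv : validB n e = true
  · rcases hq : plaqOf n p e with _ | ⟨a, b⟩
    · simp [gyrHalf_apply_of_plaqOf_eq_none hv hq]
    · obtain ⟨ha, ha', hb, hb', hp⟩ := plaqOf_eq_some hq
      rw [gyrHalf_apply_of_plaqOf_eq_some hv hq, gyrHalf_apply_of_plaqOf_eq_some hv hq,
        altPlaq_gyrHalf ha ha' hb hb' hp, Bool.xor_assoc, Bool.xor_self, Bool.xor_false]
  · have h₁ := mt (gyrHalf_mem_supportedConfigs n p (gyrHalf n p φ) e) hv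
    have h₂ := mt (hφ e) hv
    simp_all

theorem gyr_injOn : Set.InjOn (gyr n) (supportedConfigs n) := by
  intro φ hφ ψ hψ h
  have := congrArg (fun χ => gyrHalf n 1 (gyrHalf n 0 χ)) h
  simp only [gyr, Hminus, Hplus] at this
  rwa [gyrHalf_gyrHalf (gyrHalf_mem_supportedConfigs n 1 φ),
    gyrHalf_gyrHalf (gyrHalf_mem_supportedConfigs n 1 ψ), gyrHalf_gyrHalf hφ,
    gyrHalf_gyrHalf hψ] at this

end Gyration

section Column

variable {n x : ℕ} (ψ : SqEdge → Bool)

/-- The `if` selects the cell of the round containing the edge: the plaquette above it, the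
plaquette below it, or a boundary cell (where `N` is taken to be `0`). -/
theorem toInt_gyrHalf_h_add {p j : ℕ} (hx : 1 ≤ x) (hx' : x ≤ n - 1) (hj : 1 ≤ j)
    (hj' : j ≤ n - 1) (hp : p ≤ 1) :
    (gyrHalf n p ψ (.h x j)).toInt + (ψ (.h x j)).toInt =
      1 + if (x + j) % 2 = p then Nplaq ψ x j else if 2 ≤ j then Nplaq ψ x (j - 1) else 0 := by
  have hv : validB n (.h x j) = true := by
    simp only [validB, Bool.and_eq_true, decide_eq_true_eq]; omega
  have hq := plaqOf_h_column (n := n) hx hx' hj hj' hp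
  split_ifs at hq ⊢
  · rw [gyrHalf_apply_of_plaqOf_eq_some hv hq, Nplaq_eq_bot]
    cases altPlaq ψ x j <;> cases ψ (.h x j) <;> rfl
  · rw [gyrHalf_apply_of_plaqOf_eq_some hv hq, Nplaq_eq_top, Nat.sub_add_cancel hj]
    cases altPlaq ψ x (j - 1) <;> cases ψ (.h x j) <;> rfl
  · rw [gyrHalf_apply_of_plaqOf_eq_none hv hq]
    cases ψ (.h x j) <;> rfl

def plaqFlux (n x : ℕ) (ψ : SqEdge → Bool) (y : ℕ) : ℤ :=
  if (x + y) % 2 = 0 then Nplaq (gyr n ψ) x y else -Nplaq ψ x y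

theorem toInt_gyr_h_sub {j : ℕ} (hx : 1 ≤ x) (hx' : x ≤ n - 1) (hj : 1 ≤ j) (hj' : j ≤ n - 1) :
    (gyr n ψ (.h x j)).toInt - (ψ (.h x j)).toInt =
      plaqFlux n x ψ j + if 2 ≤ j then plaqFlux n x ψ (j - 1) else 0 := by
  have hplus := toInt_gyrHalf_h_add ψ hx hx' hj hj' (p := 1) le_rfl
  have hminus : (gyr n ψ (.h x j)).toInt + (Hplus n ψ (.h x j)).toInt = _ :=
    toInt_gyrHalf_h_add (Hplus n ψ) hx hx' hj hj' (p := 0) zero_le_one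
  have hG : ∀ k, 1 ≤ k → k ≤ n - 1 → (x + k) % 2 = 0 →
      Nplaq (gyr n ψ) x k = Nplaq (Hplus n ψ) x k :=
    fun k hk hk' hpk => Nplaq_gyrHalf hx hx' hk hk' hpk _
  have hGj := hG j hj hj'
  have hGj' := hG (j - 1)
  unfold plaqFlux
  change (gyrHalf n 1 ψ (.h x j)).toInt + _ = _ at hplus
  change _ + (gyrHalf n 1 ψ (.h x j)).toInt = _ at hminus
  split_ifs at hplus hminus ⊢ <;> omega

def colPotential (ψ : SqEdge → Bool) (x : ℕ) : ℕ → ℤ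
  | 0 => 0
  | y + 1 => (ψ (.h x (y + 1))).toInt - colPotential ψ x y

theorem colPotential_gyr_sub {y : ℕ} (hx : 1 ≤ x) (hx' : x ≤ n - 1) (hy : 1 ≤ y)
    (hy' : y ≤ n - 1) : colPotential (gyr n ψ) x y - colPotential ψ x y = plaqFlux n x ψ y := by
  induction y, hy using Nat.le_induction with
  | base =>
    have := toInt_gyr_h_sub ψ hx hx' le_rfl hy'
    rw [if_neg (by omega), add_zero] at this
    simp only [colPotential]
    linarith
  | succ y hy ih =>
    have := toInt_gyr_h_sub ψ hx hx' (by omega) hy'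
    simp only [colPotential]
    rw [if_pos (by omega), Nat.add_sub_cancel] at this
    linarith [ih (by omega)]

end Column

theorem orbitG_subset_supportedConfigs {n : ℕ} {φ : SqEdge → Bool}
    (hφ : φ ∈ supportedConfigs n) : orbitG n φ ⊆ supportedConfigs n := by
  rintro _ ⟨_ | k, rfl⟩
  · exact hφ
  · dsimp only
    rw [Function.iterate_succ_apply']
    exact gyrHalf_mem_supportedConfigs n 0 _

theorem orbit_sum_lemma_general (n : ℕ) (x y : ℕ)
    (hx : 1 ≤ x) (hx' : x ≤ n - 1) (hy : 1 ≤ y) (hy' : y ≤ n - 1)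
    (φ : SqEdge → Bool) (hφ : IsFpl n φ ∧ BPlus n φ) :
    ∑ᶠ ψ ∈ orbitG n φ, Nplaq ψ x y = 0 := by
  have hsub := orbitG_subset_supportedConfigs hφ.1.1
  have hfin : (orbitG n φ).Finite := (supportedConfigs_finite n).subset hsub
  have hshift := finsum_mem_range_iterate_comp (M := ℤ) hfin (gyr_injOn.mono hsub)
  have htele : ∑ᶠ ψ ∈ orbitG n φ, plaqFlux n x ψ y = 0 := by
    rw [← finsum_mem_congr rfl fun ψ _ => colPotential_gyr_sub ψ hx hx' hy hy',
      finsum_mem_sub_distrib _ _ hfin, orbitG, hshift (fun ψ => colPotential ψ x y), sub_self]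
  unfold plaqFlux at htele
  split_ifs at htele
  · rwa [orbitG, ← hshift]
  · rwa [finsum_mem_neg_distrib _ hfin, neg_eq_zero] at htele

/-- **Orbit-sum lemma on the square.**  For every plaquette `α = (x,y)` of the `n × n`
domain and every `φ ∈ Fpl(n,+)`, the sum of `N_α` over the gyration orbit of `φ`
vanishes. -/
theorem orbit_sum_lemma (n : ℕ) (hn : 1 ≤ n) (x y : ℕ)
    (hx : 1 ≤ x) (hx' : x ≤ n - 1) (hy : 1 ≤ y) (hy' : y ≤ n - 1)
    (φ : SqEdge → Bool) (hφ : IsFpl n φ ∧ BPlus n φ) :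
    ∑ᶠ ψ ∈ orbitG n φ, Nplaq ψ x y = 0 :=
  orbit_sum_lemma_general n x y hx hx' hy hy' φ hφ
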